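/- Let (Q, μ) be a measure space and let K be a densely defined linear operator on L²(Q, μ; ℂ) with adjoint K*. Suppose Ψ₀ is in the domain of K, Ψ₀ is not the zero element, Ψ₀ is almost everywhere real-valued and nonnegative, and K Ψ₀ = k₀ · Ψ₀ for some complex number k₀. Then for every φ in the domain of K* that is almost everywhere real-valued with φ(q) > 0 for μ-almost every q, and for all real numbers a, b such that a · φ(q) ≤ Re((K* φ)(q)) ≤ b · φ(q) for μ-almost every q ∈ Q, one has a ≤ Re(k₀) ≤ b. -/

import Mathlib

open MeasureTheory
open scoped ComplexInnerProductSpace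

/-!
Pair the eigenvalue equation with `φ`: `⟪K* φ, Ψ₀⟫ = k₀ ⟪φ, Ψ₀⟫`. Since `φ` and `Ψ₀` are real, both
inner products are integrals of real functions against the weight `Ψ₀ ≥ 0`, and
`⟪φ, Ψ₀⟫ = ∫ φ Ψ₀ > 0` because `φ > 0` and `Ψ₀ ≠ 0`. Integrating `a φ ≤ Re (K* φ) ≤ b φ` against
`Ψ₀` gives `a ∫ φ Ψ₀ ≤ Re k₀ ∫ φ Ψ₀ ≤ b ∫ φ Ψ₀`.
-/

theorem LinearPMap.inner_adjoint_apply_of_apply_eq_smul {𝕜 E : Type*} [RCLike 𝕜]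
    [NormedAddCommGroup E] [InnerProductSpace 𝕜 E] [CompleteSpace E] {T : E →ₗ.[𝕜] E}
    (hT : Dense (T.domain : Set E)) {x : T.domain} {c : 𝕜} (hx : T x = c • (x : E))
    (y : T.adjoint.domain) : inner 𝕜 (T.adjoint y) (x : E) = c * inner 𝕜 (y : E) (x : E) := by
  rw [adjoint_isFormalAdjoint hT y x, hx, inner_smul_right]

namespace MeasureTheory

variable {α : Type*} [MeasurableSpace α] {μ : Measure α}

theorem integral_mul_pos_of_ae_pos {f g : α → ℝ} (hfg : Integrable (fun q => f q * g q) μ)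
    (hf : ∀ᵐ q ∂μ, 0 < f q) (hg : ∀ᵐ q ∂μ, 0 ≤ g q) (hg₀ : ¬g =ᵐ[μ] 0) :
    0 < ∫ q, f q * g q ∂μ := by
  have hfg₀ : 0 ≤ᵐ[μ] fun q => f q * g q := by
    filter_upwards [hf, hg] with q hfq hgq
    exact mul_nonneg hfq.le hgq
  refine (integral_nonneg_of_ae hfg₀).lt_of_ne' fun hzero => hg₀ ?_
  filter_upwards [(integral_eq_zero_iff_of_nonneg_ae hfg₀ hfg).mp hzero, hf] with q hq hfq
  exact (mul_eq_zero.mp hq).resolve_left hfq.ne'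

theorem const_mul_integral_mul_le_of_ae_le {f h g : α → ℝ} {c : ℝ}
    (hfg : Integrable (fun q => f q * g q) μ) (hhg : Integrable (fun q => h q * g q) μ)
    (hle : ∀ᵐ q ∂μ, c * f q ≤ h q) (hg : ∀ᵐ q ∂μ, 0 ≤ g q) :
    c * ∫ q, f q * g q ∂μ ≤ ∫ q, h q * g q ∂μ := by
  rw [← integral_const_mul]
  refine integral_mono_ae (hfg.const_mul c) hhg ?_
  filter_upwards [hle, hg] with q hq hgq
  rw [← mul_assoc]
  exact mul_le_mul_of_nonneg_right hq hgq

theorem integral_mul_le_const_mul_of_ae_le {f h g : α → ℝ} {c : ℝ}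
    (hfg : Integrable (fun q => f q * g q) μ) (hhg : Integrable (fun q => h q * g q) μ)
    (hle : ∀ᵐ q ∂μ, h q ≤ c * f q) (hg : ∀ᵐ q ∂μ, 0 ≤ g q) :
    ∫ q, h q * g q ∂μ ≤ c * ∫ q, f q * g q ∂μ := by
  rw [← integral_const_mul]
  refine integral_mono_ae hhg (hfg.const_mul c) ?_
  filter_upwards [hle, hg] with q hq hgq
  rw [← mul_assoc]
  exact mul_le_mul_of_nonneg_right hq hgq

theorem Lp.eq_zero_of_ae_re_eq_zero {p : ENNReal} (f : Lp ℂ p μ)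
    (him : ∀ᵐ q ∂μ, (f q).im = 0) (hre : ∀ᵐ q ∂μ, (f q).re = 0) : f = 0 := by
  refine Lp.eq_zero_iff_ae_eq_zero.mpr ?_
  filter_upwards [him, hre] with q hq hq'
  exact Complex.ext hq' hq

namespace L2

theorem integrable_re_mul_re (f g : Lp ℂ 2 μ) :
    Integrable (fun q => (f q).re * (g q).re) μ :=
  (Lp.memLp f).re.integrable_mul (Lp.memLp g).re

theorem re_inner_eq_integral_of_ae_im_eq_zero (f g : Lp ℂ 2 μ) (hg : ∀ᵐ q ∂μ, (g q).im = 0) :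
    (⟪f, g⟫).re = ∫ q, (f q).re * (g q).re ∂μ := by
  rw [inner_def, ← RCLike.re_to_complex, ← integral_re (integrable_inner f g)]
  refine integral_congr_ae ?_
  filter_upwards [hg] with q hq
  simp [hq, mul_comm]

theorem im_inner_eq_zero_of_ae_im_eq_zero (f g : Lp ℂ 2 μ) (hf : ∀ᵐ q ∂μ, (f q).im = 0)
    (hg : ∀ᵐ q ∂μ, (g q).im = 0) : (⟪f, g⟫).im = 0 := by
  rw [inner_def, ← RCLike.im_to_complex, ← integral_im (integrable_inner f g)]
  refine integral_eq_zero_of_ae ?_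
  filter_upwards [hf, hg] with q hfq hgq
  simp [hfq, hgq]

end L2

end MeasureTheory

/-- If a densely defined operator `K` on `L²(Q, μ; ℂ)` has a nonzero
eigenvector `Ψ₀` which is a.e. real-valued and nonnegative, with eigenvalue `k₀ ∈ ℂ`,
then for every a.e. real-valued, a.e. strictly positive `φ` in the domain of the
adjoint `K*`, and all `a b : ℝ` with `a · φ ≤ Re (K* φ) ≤ b · φ` a.e.,
one has `a ≤ Re k₀ ≤ b`. -/
theorem re_eigenvalue_bounds_of_nonneg_eigenvector_nonsym
    {Q : Type*} [MeasurableSpace Q] (μ : Measure Q)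
    (K : Lp ℂ 2 μ →ₗ.[ℂ] Lp ℂ 2 μ) (hK : Dense (K.domain : Set (Lp ℂ 2 μ)))
    (Ψ₀ : K.domain) (hΨ₀ne : (Ψ₀ : Lp ℂ 2 μ) ≠ 0)
    (hΨ₀real : ∀ᵐ q ∂μ, (((Ψ₀ : Lp ℂ 2 μ) : Q → ℂ) q).im = 0)
    (hΨ₀nonneg : ∀ᵐ q ∂μ, 0 ≤ (((Ψ₀ : Lp ℂ 2 μ) : Q → ℂ) q).re)
    (k₀ : ℂ) (heig : K Ψ₀ = k₀ • (Ψ₀ : Lp ℂ 2 μ))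
    (φ : K.adjoint.domain)
    (hφreal : ∀ᵐ q ∂μ, (((φ : Lp ℂ 2 μ) : Q → ℂ) q).im = 0)
    (hφpos : ∀ᵐ q ∂μ, 0 < (((φ : Lp ℂ 2 μ) : Q → ℂ) q).re)
    (a b : ℝ)
    (hab : ∀ᵐ q ∂μ,
      a * (((φ : Lp ℂ 2 μ) : Q → ℂ) q).re ≤ ((K.adjoint φ : Q → ℂ) q).re ∧
      ((K.adjoint φ : Q → ℂ) q).re ≤ b * (((φ : Lp ℂ 2 μ) : Q → ℂ) q).re) :
    a ≤ k₀.re ∧ k₀.re ≤ b := by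
  have hI : 0 < ∫ q, ((φ : Lp ℂ 2 μ) q).re * ((Ψ₀ : Lp ℂ 2 μ) q).re ∂μ :=
    integral_mul_pos_of_ae_pos (L2.integrable_re_mul_re _ _) hφpos hΨ₀nonneg
      fun h => hΨ₀ne (Lp.eq_zero_of_ae_re_eq_zero _ hΨ₀real h)
  have hJ : ∫ q, ((K.adjoint φ : Lp ℂ 2 μ) q).re * ((Ψ₀ : Lp ℂ 2 μ) q).re ∂μ
      = k₀.re * ∫ q, ((φ : Lp ℂ 2 μ) q).re * ((Ψ₀ : Lp ℂ 2 μ) q).re ∂μ := by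
    rw [← L2.re_inner_eq_integral_of_ae_im_eq_zero _ _ hΨ₀real,
      ← L2.re_inner_eq_integral_of_ae_im_eq_zero _ _ hΨ₀real,
      LinearPMap.inner_adjoint_apply_of_apply_eq_smul hK heig, Complex.mul_re,
      L2.im_inner_eq_zero_of_ae_im_eq_zero _ _ hφreal hΨ₀real, mul_zero, sub_zero]
  have hlow := const_mul_integral_mul_le_of_ae_le (L2.integrable_re_mul_re _ _)
    (L2.integrable_re_mul_re _ _) (hab.mono fun _ h => h.1) hΨ₀nonneg
  have hup := integral_mul_le_const_mul_of_ae_le (L2.integrable_re_mul_re _ _)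
    (L2.integrable_re_mul_re _ _) (hab.mono fun _ h => h.2) hΨ₀nonneg
  rw [hJ] at hlow hup
  exact ⟨le_of_mul_le_mul_right hlow hI, le_of_mul_le_mul_right hup hI⟩
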